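/- arXiv:2503.22142 — 2 statements merged into one kernel-verified Lean document; each statement's English description precedes it below -/
import Mathlib

section
/- Let t > 0 and let f(·,t) : ℝ → ℂ be a Schwartz function (in α) such that L₀f(·,t) and Ω₀f(·,t) are in L²(ℝ), where L₀f = (t/2)∂ₜf + α∂_α f and Ω₀f = α∂ₜf + (it/2)f. Then for every α with |α| ≥ 1, |f(α,t)| ≤ (2/|α|^{1/2}) ‖L₀f(·,t)‖_{L²} + (t/|α|^{3/2}) ‖Ω₀f(·,t)‖_{L²}. -/
open Complex MeasureTheory Set Filter Topology
open scoped ENNReal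

lemma KS.int_abs_rpow {p : ℝ} (hp : p < -1) {c : ℝ} (hc : 0 < c) :
    ∫ x in Ioi c, |x| ^ p = -c ^ (p + 1) / (p + 1) := by
  rw [setIntegral_congr_fun measurableSet_Ioi
      (fun x (hx : c < x) => by rw [abs_of_pos (hc.trans hx)])]
  exact integral_Ioi_rpow_of_lt hp hc

lemma KS.intOn_abs_rpow {p : ℝ} (hp : p < -1) {c : ℝ} (hc : 0 < c) :
    IntegrableOn (fun x => |x| ^ p) (Ioi c) := by
  apply (integrableOn_Ioi_rpow_of_lt hp hc).congr_fun
    (fun x (hx : c < x) => by rw [abs_of_pos (hc.trans hx)]) measurableSet_Ioi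

lemma KS.restrict_Iic_eq_map {c : ℝ} :
    (volume : Measure ℝ).restrict (Iic c) =
      Measure.map (fun x : ℝ => -x) ((volume : Measure ℝ).restrict (Ioi (-c))) := by
  have A : MeasurableEmbedding fun x : ℝ => -x :=
    (Homeomorph.neg ℝ).isClosedEmbedding.measurableEmbedding
  conv_lhs => rw [← Measure.map_neg_eq_self (volume : Measure ℝ)]
  rw [A.restrict_map]
  congr 1
  · have : (fun x : ℝ => -x) ⁻¹' Iic c = Ici (-c) := by ext x; simp [neg_le]
    rw [this, Measure.restrict_congr_set Ioi_ae_eq_Ici.symm]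

lemma KS.int_abs_rpow_neg {p : ℝ} (hp : p < -1) {c : ℝ} (hc : c < 0) :
    ∫ x in Iic c, |x| ^ p = -(-c) ^ (p + 1) / (p + 1) := by
  have h := _root_.integral_comp_neg_Iic c (fun y => |y| ^ p)
  simp only [abs_neg] at h
  rw [h, KS.int_abs_rpow hp (by linarith)]

lemma KS.intOn_abs_rpow_neg {p : ℝ} (hp : p < -1) {c : ℝ} (hc : c < 0) :
    IntegrableOn (fun x => |x| ^ p) (Iic c) := by
  have A : MeasurableEmbedding fun x : ℝ => -x :=
    (Homeomorph.neg ℝ).isClosedEmbedding.measurableEmbedding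
  rw [IntegrableOn, KS.restrict_Iic_eq_map, A.integrable_map_iff]
  simpa [Function.comp_def, abs_neg] using (KS.intOn_abs_rpow hp (show (0:ℝ) < -c by linarith)).integrable


lemma KS.conj22 : Real.HolderConjugate 2 2 := Real.HolderConjugate.two_two

lemma KS.holder_int {S : Set ℝ} {u : ℝ → ℂ} (hu : MemLp u 2 volume)
    {w : ℝ → ℝ} (hw : MemLp w 2 (volume.restrict S)) :
    Integrable (fun x => ‖u x‖ * w x) (volume.restrict S) := by
  have h1 : MemLp (fun x => ‖u x‖) 2 (volume.restrict S) := (hu.restrict S).norm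
  have hpqr : (1:ℝ≥0∞) / 1 = 1 / 2 + 1 / 2 := by
    rw [ENNReal.div_add_div_same, one_add_one_eq_two, ENNReal.div_self two_ne_zero ENNReal.ofNat_ne_top, one_div_one]
  have h : MemLp (w • fun x => ‖u x‖) 1 (volume.restrict S) := h1.smul hw
  exact (memLp_one_iff_integrable.mp h).congr
    (ae_of_all _ fun x => by simp [smul_eq_mul, mul_comm])

lemma KS.holder_bound {S : Set ℝ} (hS : MeasurableSet S) {u : ℝ → ℂ} (hu : MemLp u 2 volume)
    {w : ℝ → ℝ} (hw0 : ∀ x ∈ S, 0 ≤ w x) (hw : MemLp w 2 (volume.restrict S)) :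
    ∫ x in S, ‖u x‖ * w x ≤
      (eLpNorm u 2 volume).toReal * (∫ x in S, w x ^ (2:ℝ)) ^ ((2:ℝ)⁻¹) := by
  have h2 : (ENNReal.ofReal (2:ℝ)) = (2 : ℝ≥0∞) := by norm_num
  have step1 : ∫ x in S, ‖u x‖ * w x = ∫ x in S, ‖u x‖ * ‖w x‖ :=
    setIntegral_congr_fun hS fun x hx => by rw [Real.norm_of_nonneg (hw0 x hx)]
  have hu2 : MemLp (fun x => ‖u x‖) (ENNReal.ofReal 2) (volume.restrict S) := by
    rw [h2]; exact (hu.restrict S).norm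
  have hw2 : MemLp w (ENNReal.ofReal 2) (volume.restrict S) := by rw [h2]; exact hw
  have step2 := integral_mul_norm_le_Lp_mul_Lq (μ := volume.restrict S) KS.conj22 hu2 hw2
  simp only [norm_norm] at step2
  have eA : (∫ x in S, ‖u x‖ ^ (2:ℝ)) ^ ((1:ℝ)/2) ≤ (eLpNorm u 2 volume).toReal := by
    have e1 : eLpNorm u 2 (volume.restrict S)
        = ENNReal.ofReal ((∫ x in S, ‖u x‖ ^ (2:ℝ)) ^ ((2:ℝ)⁻¹)) := by
      have := (hu.restrict S).eLpNorm_eq_integral_rpow_norm two_ne_zero ENNReal.ofNat_ne_top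
      simpa using this
    have e2 : (eLpNorm u 2 (volume.restrict S)).toReal
        = (∫ x in S, ‖u x‖ ^ (2:ℝ)) ^ ((2:ℝ)⁻¹) := by
      rw [e1, ENNReal.toReal_ofReal (by positivity)]
    calc (∫ x in S, ‖u x‖ ^ (2:ℝ)) ^ ((1:ℝ)/2)
        = (eLpNorm u 2 (volume.restrict S)).toReal := by rw [e2]; norm_num
      _ ≤ (eLpNorm u 2 volume).toReal :=
        ENNReal.toReal_mono hu.eLpNorm_ne_top
          (eLpNorm_mono_measure _ Measure.restrict_le_self)
  have eB : (∫ x in S, ‖w x‖ ^ (2:ℝ)) ^ ((1:ℝ)/2) = (∫ x in S, w x ^ (2:ℝ)) ^ ((2:ℝ)⁻¹) := by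
    rw [show ((1:ℝ)/2) = (2:ℝ)⁻¹ by norm_num]
    congr 1
    exact setIntegral_congr_fun hS fun x hx => by rw [Real.norm_of_nonneg (hw0 x hx)]
  calc ∫ x in S, ‖u x‖ * w x = ∫ x in S, ‖u x‖ * ‖w x‖ := step1
    _ ≤ (∫ x in S, ‖u x‖ ^ (2:ℝ)) ^ ((1:ℝ)/2) * (∫ x in S, ‖w x‖ ^ (2:ℝ)) ^ ((1:ℝ)/2) := step2
    _ ≤ (eLpNorm u 2 volume).toReal * (∫ x in S, w x ^ (2:ℝ)) ^ ((2:ℝ)⁻¹) := by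
        rw [eB]
        exact mul_le_mul_of_nonneg_right eA (Real.rpow_nonneg
          (setIntegral_nonneg hS fun x hx => Real.rpow_nonneg (hw0 x hx) _) _)


lemma KS.norm_exp_I_mul (r : ℝ) : ‖Complex.exp (Complex.I * (r:ℂ))‖ = 1 := by
  rw [Complex.norm_exp]
  simp [Complex.mul_re]

lemma KS.hasDeriv (t : ℝ) (F : SchwartzMap ℝ ℂ) {x : ℝ} (hx : x ≠ 0) :
    HasDerivAt (fun y : ℝ => Complex.exp (Complex.I * ((t^2/(4*y) : ℝ):ℂ)) * F y)
      (Complex.exp (Complex.I * ((t^2/(4*x) : ℝ):ℂ)) *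
        (deriv F x - Complex.I * ((t^2/(4*x^2) : ℝ):ℂ) * F x)) x := by
  have h1 : HasDerivAt (fun y : ℝ => t^2/(4*y)) (-(t^2/(4*x^2))) x := by
    have h := (hasDerivAt_inv hx).const_mul (t^2/4)
    have e : (fun y : ℝ => t^2/(4*y)) = fun y : ℝ => t^2/4 * y⁻¹ := by
      funext y; ring
    rw [e]
    refine h.congr_deriv ?_
    field_simp
  have h2 := h1.ofReal_comp (z := x)
  have h3 := h2.const_mul Complex.I
  have h4 := h3.cexp
  have h5 := h4.mul (F.differentiableAt.hasDerivAt)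
  refine h5.congr_deriv ?_
  push_cast
  ring

lemma KS.tendsto_exp_mul (t : ℝ) (F : SchwartzMap ℝ ℂ) {l : Filter ℝ}
    (hl : l ≤ cocompact ℝ) :
    Tendsto (fun y : ℝ => Complex.exp (Complex.I * ((t^2/(4*y) : ℝ):ℂ)) * F y) l (𝓝 0) := by
  apply squeeze_zero_norm (a := fun y => ‖F y‖)
  · intro y
    rw [norm_mul, KS.norm_exp_I_mul, one_mul]
  · have h : Tendsto (⇑F) l (𝓝 0) := (zero_at_infty F).mono_left hl
    simpa using h.norm

lemma KS.rpow_sq_eq (x : ℝ) (p : ℝ) : (|x| ^ p) ^ (2:ℕ) = |x| ^ (2*p) := by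
  rw [← Real.rpow_natCast (|x| ^ p) 2, ← Real.rpow_mul (abs_nonneg x)]
  norm_num
  ring_nf

lemma KS.weight_mem {S : Set ℝ} (p : ℝ)
    (hI : IntegrableOn (fun x => |x| ^ (2*p)) S) :
    MemLp (fun x => |x| ^ p) 2 (volume.restrict S) := by
  have hm : AEStronglyMeasurable (fun x : ℝ => |x| ^ p) (volume.restrict S) :=
    (measurable_id.abs.pow_const p).aestronglyMeasurable
  rw [memLp_two_iff_integrable_sq hm]
  exact hI.congr (ae_of_all _ fun x => (KS.rpow_sq_eq x p).symm)

lemma KS.ray (t : ℝ) (ht : 0 < t) (L Ω : ℝ → ℂ)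
    (hL2 : MemLp L 2 volume) (hΩ2 : MemLp Ω 2 volume) (F : SchwartzMap ℝ ℂ)
    (hkey : ∀ x : ℝ, x ≠ 0 →
      deriv F x - Complex.I * ((t^2/(4*x^2) : ℝ):ℂ) * F x
        = (((x:ℂ))^2)⁻¹ * ((x:ℂ) * L x - ((t:ℂ)/2) * Ω x))
    (α : ℝ) (hα : 1 ≤ |α|) :
    ‖F α‖ ≤ (eLpNorm L 2 volume).toReal * (|α| ^ (-1:ℝ)) ^ ((2:ℝ)⁻¹)
      + t/2 * ((eLpNorm Ω 2 volume).toReal * (|α| ^ (-3:ℝ)/3) ^ ((2:ℝ)⁻¹)) := by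
  have hα0 : α ≠ 0 := by intro h; rw [h] at hα; simp at hα; linarith
  set g : ℝ → ℂ := fun x => Complex.exp (Complex.I * ((t^2/(4*x) : ℝ):ℂ)) *
      (deriv F x - Complex.I * ((t^2/(4*x^2) : ℝ):ℂ) * F x) with hg_def
  set w1 : ℝ → ℝ := fun x => |x| ^ (-1:ℝ) with hw1_def
  set w2 : ℝ → ℝ := fun x => |x| ^ (-2:ℝ) with hw2_def
  set h : ℝ → ℝ := fun x => ‖L x‖ * w1 x + t/2 * (‖Ω x‖ * w2 x) with hh_def
  -- pointwise norm bound
  have hgh : ∀ x : ℝ, x ≠ 0 → ‖g x‖ ≤ h x := by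
    intro x hx
    have hx2 : (0:ℝ) < x^2 := by positivity
    have e1 : ‖g x‖ = (x^2)⁻¹ * ‖(x:ℂ) * L x - ((t:ℂ)/2) * Ω x‖ := by
      rw [hg_def]
      simp only
      rw [norm_mul, KS.norm_exp_I_mul, one_mul, hkey x hx, norm_mul, norm_inv, norm_pow,
        Complex.norm_real, Real.norm_eq_abs, _root_.sq_abs]
    have e2 : ‖(x:ℂ) * L x - ((t:ℂ)/2) * Ω x‖ ≤ |x| * ‖L x‖ + t/2 * ‖Ω x‖ := by
      refine (norm_sub_le _ _).trans ?_
      rw [norm_mul, norm_mul]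
      gcongr
      · rw [Complex.norm_real, Real.norm_eq_abs]
      · rw [norm_div]
        simp [Complex.norm_real, abs_of_pos ht]
    have e3 : (x^2)⁻¹ * (|x| * ‖L x‖ + t/2 * ‖Ω x‖) = h x := by
      have hxx : x^2 = |x| * |x| := by rw [abs_mul_abs_self x]; ring
      have hax : (0:ℝ) < |x| := abs_pos.mpr hx
      rw [hh_def, hw1_def, hw2_def]
      simp only
      rw [Real.rpow_neg_one, show (-2:ℝ) = -(2:ℕ) by norm_num,
        Real.rpow_neg (abs_nonneg x), Real.rpow_natCast, hxx]
      field_simp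
    rw [e1, ← e3]
    exact mul_le_mul_of_nonneg_left e2 (by positivity)
  -- continuity of g away from 0
  have hg_cont : ContinuousOn g {x : ℝ | x ≠ 0} := by
    have hder : Continuous (deriv (⇑F)) := (F.smooth ⊤).continuous_deriv (by simp)
    have hc1 : ContinuousOn (fun x : ℝ => ((t^2/(4*x) : ℝ):ℂ)) {x : ℝ | x ≠ 0} := by
      apply Complex.continuous_ofReal.comp_continuousOn
      exact continuousOn_const.div (by fun_prop) (fun x hx => by
        simp only [mem_setOf_eq] at hx; positivity)
    have hc2 : ContinuousOn (fun x : ℝ => ((t^2/(4*x^2) : ℝ):ℂ)) {x : ℝ | x ≠ 0} := by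
      apply Complex.continuous_ofReal.comp_continuousOn
      exact continuousOn_const.div (by fun_prop) (fun x hx => by
        simp only [mem_setOf_eq] at hx; positivity)
    exact ((Complex.continuous_exp.comp_continuousOn
        ((continuousOn_const.mul hc1))).mul
      ((hder.continuousOn).sub ((continuousOn_const.mul hc2).mul F.continuous.continuousOn)))
  -- ray data (case split on the sign of α)
  obtain ⟨S, hS, hSsub, hI2, hI4, hJ2, hJ4, hFα⟩ :
      ∃ S : Set ℝ, MeasurableSet S ∧ (∀ x ∈ S, x ≠ 0) ∧
        IntegrableOn (fun x => |x| ^ (-2:ℝ)) S ∧ IntegrableOn (fun x => |x| ^ (-4:ℝ)) S ∧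
        (∫ x in S, |x| ^ (-2:ℝ)) = |α| ^ (-1:ℝ) ∧
        (∫ x in S, |x| ^ (-4:ℝ)) = |α| ^ (-3:ℝ)/3 ∧
        (IntegrableOn g S → ‖F α‖ = ‖∫ x in S, g x‖) := by
    rcases lt_or_gt_of_ne hα0 with hneg | hpos
    · refine ⟨Iic α, measurableSet_Iic, fun x hx => ne_of_lt (lt_of_le_of_lt hx hneg),
        KS.intOn_abs_rpow_neg (by norm_num) hneg,
        KS.intOn_abs_rpow_neg (by norm_num) hneg, ?_, ?_, ?_⟩
      · rw [KS.int_abs_rpow_neg (by norm_num) hneg, abs_of_neg hneg]; norm_num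
      · rw [KS.int_abs_rpow_neg (by norm_num) hneg, abs_of_neg hneg]; norm_num
      · intro hint
        rw [integral_Iic_of_hasDerivAt_of_tendsto'
            (fun x hx => KS.hasDeriv t F (ne_of_lt (lt_of_le_of_lt hx hneg))) hint
            (KS.tendsto_exp_mul t F atBot_le_cocompact), sub_zero, norm_mul,
          KS.norm_exp_I_mul, one_mul]
    · refine ⟨Ioi α, measurableSet_Ioi, fun x hx => ne_of_gt (lt_trans hpos hx),
        KS.intOn_abs_rpow (by norm_num) hpos,
        KS.intOn_abs_rpow (by norm_num) hpos, ?_, ?_, ?_⟩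
      · rw [KS.int_abs_rpow (by norm_num) hpos, abs_of_pos hpos]; norm_num
      · rw [KS.int_abs_rpow (by norm_num) hpos, abs_of_pos hpos]; norm_num
      · intro hint
        rw [integral_Ioi_of_hasDerivAt_of_tendsto'
            (fun x hx => KS.hasDeriv t F (ne_of_gt (lt_of_lt_of_le hpos hx))) hint
            (KS.tendsto_exp_mul t F atTop_le_cocompact), zero_sub, norm_neg, norm_mul,
          KS.norm_exp_I_mul, one_mul]
  -- weights are in L² on S
  have hw1m : MemLp w1 2 (volume.restrict S) := KS.weight_mem (-1) (by
    have : (2:ℝ) * (-1) = -2 := by norm_num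
    rw [this]; exact hI2)
  have hw2m : MemLp w2 2 (volume.restrict S) := KS.weight_mem (-2) (by
    have : (2:ℝ) * (-2) = -4 := by norm_num
    rw [this]; exact hI4)
  have hw10 : ∀ x ∈ S, 0 ≤ w1 x := fun x _ => Real.rpow_nonneg (abs_nonneg x) _
  have hw20 : ∀ x ∈ S, 0 ≤ w2 x := fun x _ => Real.rpow_nonneg (abs_nonneg x) _
  have hint1 : Integrable (fun x => ‖L x‖ * w1 x) (volume.restrict S) := KS.holder_int hL2 hw1m
  have hint2 : Integrable (fun x => ‖Ω x‖ * w2 x) (volume.restrict S) := KS.holder_int hΩ2 hw2m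
  have hhint : IntegrableOn h S := hint1.add (hint2.const_mul (t/2))
  have hgint : IntegrableOn g S := by
    refine Integrable.mono' hhint ((hg_cont.mono hSsub).aestronglyMeasurable hS) ?_
    exact (ae_restrict_iff' hS).mpr (ae_of_all _ fun x hx => hgh x (hSsub x hx))
  have hsq1 : ∫ x in S, w1 x ^ (2:ℝ) = |α| ^ (-1:ℝ) := by
    rw [← hJ2]
    refine setIntegral_congr_fun hS fun x hx => ?_
    rw [hw1_def]
    simp only
    rw [← Real.rpow_mul (abs_nonneg x)]
    norm_num
  have hsq2 : ∫ x in S, w2 x ^ (2:ℝ) = |α| ^ (-3:ℝ)/3 := by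
    rw [← hJ4]
    refine setIntegral_congr_fun hS fun x hx => ?_
    rw [hw2_def]
    simp only
    rw [← Real.rpow_mul (abs_nonneg x)]
    norm_num
  calc ‖F α‖ = ‖∫ x in S, g x‖ := hFα hgint
    _ ≤ ∫ x in S, ‖g x‖ := norm_integral_le_integral_norm _
    _ ≤ ∫ x in S, h x :=
        setIntegral_mono_on hgint.norm hhint hS (fun x hx => hgh x (hSsub x hx))
    _ = (∫ x in S, ‖L x‖ * w1 x) + t/2 * ∫ x in S, ‖Ω x‖ * w2 x := by
        rw [hh_def]
        rw [integral_add hint1 (hint2.const_mul _), integral_const_mul]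
    _ ≤ (eLpNorm L 2 volume).toReal * (∫ x in S, w1 x ^ (2:ℝ)) ^ ((2:ℝ)⁻¹)
        + t/2 * ((eLpNorm Ω 2 volume).toReal * (∫ x in S, w2 x ^ (2:ℝ)) ^ ((2:ℝ)⁻¹)) := by
        refine add_le_add (KS.holder_bound hS hL2 hw10 hw1m) ?_
        exact mul_le_mul_of_nonneg_left (KS.holder_bound hS hΩ2 hw20 hw2m) (by positivity)
    _ = (eLpNorm L 2 volume).toReal * (|α| ^ (-1:ℝ)) ^ ((2:ℝ)⁻¹)
        + t/2 * ((eLpNorm Ω 2 volume).toReal * (|α| ^ (-3:ℝ)/3) ^ ((2:ℝ)⁻¹)) := by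
        rw [hsq1, hsq2]

lemma KS.final {a t C1 C2 : ℝ} (ha : 1 ≤ a) (ht : 0 < t) (hC1 : 0 ≤ C1) (hC2 : 0 ≤ C2) :
    C1 * (a ^ (-1:ℝ)) ^ ((2:ℝ)⁻¹) + t/2 * (C2 * (a ^ (-3:ℝ)/3) ^ ((2:ℝ)⁻¹))
      ≤ 2 / a ^ ((1:ℝ)/2) * C1 + t / a ^ ((3:ℝ)/2) * C2 := by
  have ha0 : (0:ℝ) < a := lt_of_lt_of_le one_pos ha
  have e1 : (a ^ (-1:ℝ)) ^ ((2:ℝ)⁻¹) = (a ^ ((1:ℝ)/2))⁻¹ := by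
    rw [← Real.rpow_mul ha0.le, show (-1:ℝ) * (2:ℝ)⁻¹ = -(1/2) by norm_num,
      Real.rpow_neg ha0.le]
  have e2 : (a ^ (-3:ℝ)/3) ^ ((2:ℝ)⁻¹) ≤ (a ^ ((3:ℝ)/2))⁻¹ := by
    have h3 : (0:ℝ) ≤ a ^ (-3:ℝ) := Real.rpow_nonneg ha0.le _
    calc (a ^ (-3:ℝ)/3) ^ ((2:ℝ)⁻¹) ≤ (a ^ (-3:ℝ)) ^ ((2:ℝ)⁻¹) :=
          Real.rpow_le_rpow (by positivity) (by linarith) (by norm_num)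
      _ = (a ^ ((3:ℝ)/2))⁻¹ := by
          rw [← Real.rpow_mul ha0.le, show (-3:ℝ) * (2:ℝ)⁻¹ = -(3/2) by norm_num,
            Real.rpow_neg ha0.le]
  have hs : (0:ℝ) < a ^ ((1:ℝ)/2) := Real.rpow_pos_of_pos ha0 _
  have hr : (0:ℝ) < a ^ ((3:ℝ)/2) := Real.rpow_pos_of_pos ha0 _
  have step : t/2 * (C2 * (a ^ (-3:ℝ)/3) ^ ((2:ℝ)⁻¹)) ≤ t/2 * (C2 * (a ^ ((3:ℝ)/2))⁻¹) := by
    gcongr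
  refine le_trans (add_le_add_right step _) ?_
  rw [e1]
  have A : 0 ≤ C1 * (a ^ ((1:ℝ)/2))⁻¹ := mul_nonneg hC1 (inv_nonneg.mpr hs.le)
  have B : 0 ≤ t * (C2 * (a ^ ((3:ℝ)/2))⁻¹) :=
    mul_nonneg ht.le (mul_nonneg hC2 (inv_nonneg.mpr hr.le))
  rw [show (2:ℝ) / a ^ ((1:ℝ)/2) = 2 * (a ^ ((1:ℝ)/2))⁻¹ from div_eq_mul_inv _ _,
    show t / a ^ ((3:ℝ)/2) = t * (a ^ ((3:ℝ)/2))⁻¹ from div_eq_mul_inv _ _]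
  nlinarith [A, B]

/-- Klainerman–Sobolev type pointwise decay for `|α| ≥ 1` in terms of the `L²` norms of
the vector fields `L₀f = (t/2)∂ₜf + α∂_αf` and `Ω₀f = α∂ₜf + (it/2)f`. -/
theorem stmt4 (t : ℝ) (ht : 0 < t) (f : ℝ → ℝ → ℂ)
    (hsm : ContDiff ℝ (⊤ : ℕ∞) (fun p : ℝ × ℝ => f p.1 p.2))
    (F : SchwartzMap ℝ ℂ) (hF : ∀ α : ℝ, F α = f α t)
    (L₀f Ω₀f : ℝ → ℂ)
    (hL : ∀ α : ℝ,
      L₀f α = ((t : ℂ) / 2) * deriv (f α) t + (α : ℂ) * deriv (fun a => f a t) α)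
    (hΩ : ∀ α : ℝ,
      Ω₀f α = (α : ℂ) * deriv (f α) t + Complex.I * t / 2 * f α t)
    (hL2 : MemLp L₀f 2 volume) (hΩ2 : MemLp Ω₀f 2 volume) :
    ∀ α : ℝ, 1 ≤ |α| →
      ‖f α t‖ ≤ 2 / |α| ^ ((1 : ℝ) / 2) * (eLpNorm L₀f 2 volume).toReal
        + t / |α| ^ ((3 : ℝ) / 2) * (eLpNorm Ω₀f 2 volume).toReal := by
  intro α hα
  have hfun : (fun a => f a t) = ⇑F := funext fun a => (hF a).symm
  have hderivF : deriv (fun a => f a t) = deriv (⇑F) := by rw [hfun]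
  have hkey : ∀ x : ℝ, x ≠ 0 →
      deriv F x - Complex.I * ((t^2/(4*x^2) : ℝ):ℂ) * F x
        = (((x:ℂ))^2)⁻¹ * ((x:ℂ) * L₀f x - ((t:ℂ)/2) * Ω₀f x) := by
    intro x hx
    have hxC : (x:ℂ) ≠ 0 := Complex.ofReal_ne_zero.mpr hx
    rw [hL x, hΩ x, hderivF, ← hF x]
    push_cast
    field_simp
    ring
  have hb := KS.ray t ht L₀f Ω₀f hL2 hΩ2 F hkey α hα
  have hfin := KS.final (a := |α|) hα ht
    (ENNReal.toReal_nonneg (a := eLpNorm L₀f 2 volume))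
    (ENNReal.toReal_nonneg (a := eLpNorm Ω₀f 2 volume))
  calc ‖f α t‖ = ‖F α‖ := by rw [hF α]
    _ ≤ _ := hb.trans hfin
end

section
/- For every ξ ∈ ℝ, (1/(π i)) p.v. ∫_ℝ (e^{-iξ} − e^{-iη})(e^{iξ} − e^{iη})/(ξ − η)² · e^{-iη} dη = 0. -/
open Complex Filter Topology MeasureTheory

/-!
Substituting `t = η - ξ` turns the integrand into `2 e^{-iξ} F(t) e^{-it}` with
`F(t) = (1 - cos t) / t²`, which is even and integrable on `ℝ`, so the symmetric integral reduces
to `∫_{-R}^{R} F(t) cos t dt`. The identity `F(t) cos t = 2 F(2t) - F(t)` and the scaling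
`t ↦ 2t` turn this into `∫_{-2R}^{2R} F - ∫_{-R}^{R} F`, which tends to `∫ F - ∫ F = 0`.
-/

noncomputable def oneSubCosDivSq (u : ℝ) : ℝ := (1 - Real.cos u) / u ^ 2

lemma even_oneSubCosDivSq : Function.Even oneSubCosDivSq := fun u => by
  rw [oneSubCosDivSq, oneSubCosDivSq, Real.cos_neg, neg_sq]

lemma oneSubCosDivSq_mul_sq (u : ℝ) : oneSubCosDivSq u * u ^ 2 = 1 - Real.cos u :=
  div_mul_cancel_of_imp fun hu => by simp [pow_eq_zero_iff two_ne_zero |>.mp hu]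

lemma oneSubCosDivSq_nonneg (u : ℝ) : 0 ≤ oneSubCosDivSq u :=
  div_nonneg (sub_nonneg.mpr (Real.cos_le_one u)) (sq_nonneg u)

lemma oneSubCosDivSq_le_half (u : ℝ) : oneSubCosDivSq u ≤ 1 / 2 := by
  rcases eq_or_ne u 0 with rfl | hu
  · norm_num [oneSubCosDivSq]
  · have hu2 : 0 < u ^ 2 := by positivity
    refine le_of_mul_le_mul_right ?_ hu2
    rw [oneSubCosDivSq_mul_sq]
    linarith [Real.one_sub_sq_div_two_le_cos (x := u)]

lemma oneSubCosDivSq_le_inv_one_add_sq (u : ℝ) :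
    oneSubCosDivSq u ≤ 5 / 2 * (1 + u ^ 2)⁻¹ := by
  rw [← div_eq_mul_inv, le_div_iff₀ (by positivity), mul_one_add, oneSubCosDivSq_mul_sq]
  linarith [oneSubCosDivSq_le_half u, Real.neg_one_le_cos u]

lemma measurable_oneSubCosDivSq : Measurable oneSubCosDivSq := by
  unfold oneSubCosDivSq
  fun_prop

lemma integrable_oneSubCosDivSq : Integrable oneSubCosDivSq :=
  (integrable_inv_one_add_sq.const_mul (5 / 2)).mono'
    measurable_oneSubCosDivSq.aestronglyMeasurable
    (ae_of_all _ fun u => by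
      rw [Real.norm_of_nonneg (oneSubCosDivSq_nonneg u)]
      exact oneSubCosDivSq_le_inv_one_add_sq u)

lemma oneSubCosDivSq_mul_cos (t : ℝ) :
    oneSubCosDivSq t * Real.cos t = 2 * oneSubCosDivSq (2 * t) - oneSubCosDivSq t := by
  rcases eq_or_ne t 0 with rfl | ht
  · simp [oneSubCosDivSq]
  · simp only [oneSubCosDivSq, Real.cos_two_mul]
    field_simp
    ring

lemma integral_oneSubCosDivSq_mul_cos (R : ℝ) :
    ∫ t in -R..R, oneSubCosDivSq t * Real.cos t =
      (∫ u in -(2 * R)..2 * R, oneSubCosDivSq u) - ∫ u in -R..R, oneSubCosDivSq u := by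
  have hscaled : ∫ t in -R..R, 2 * oneSubCosDivSq (2 * t) =
      ∫ u in -(2 * R)..2 * R, oneSubCosDivSq u := by
    rw [intervalIntegral.integral_const_mul,
      intervalIntegral.integral_comp_mul_left oneSubCosDivSq two_ne_zero, smul_eq_mul,
      mul_inv_cancel_left₀ two_ne_zero, mul_neg]
  simp only [oneSubCosDivSq_mul_cos]
  rw [intervalIntegral.integral_sub
      ((integrable_oneSubCosDivSq.comp_mul_left' two_ne_zero).const_mul 2).intervalIntegrable
      integrable_oneSubCosDivSq.intervalIntegrable, hscaled]

lemma tendsto_integral_oneSubCosDivSq_mul_cos :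
    Tendsto (fun R => ∫ t in -R..R, oneSubCosDivSq t * Real.cos t) atTop (𝓝 0) := by
  have hsymm : Tendsto (fun R => ∫ u in -R..R, oneSubCosDivSq u) atTop
      (𝓝 (∫ u, oneSubCosDivSq u)) :=
    intervalIntegral_tendsto_integral integrable_oneSubCosDivSq tendsto_neg_atTop_atBot
      tendsto_id
  have hdouble := hsymm.comp (tendsto_id.const_mul_atTop two_pos)
  rw [funext integral_oneSubCosDivSq_mul_cos, ← sub_self (∫ u, oneSubCosDivSq u)]
  exact hdouble.sub hsymm

lemma Function.Odd.intervalIntegral_symm_eq_zero {E : Type*} [NormedAddCommGroup E]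
    [NormedSpace ℝ E] {f : ℝ → E} (hf : f.Odd) (R : ℝ) : ∫ x in -R..R, f x = 0 := by
  have h := intervalIntegral.integral_comp_neg (a := -R) (b := R) f
  simp only [hf.eq, intervalIntegral.integral_neg, neg_neg] at h
  rw [neg_eq_iff_add_eq_zero, ← two_smul ℝ, smul_eq_zero] at h
  exact h.resolve_left two_ne_zero

lemma Function.Even.integral_ofReal_mul_exp_neg_I {φ : ℝ → ℝ} (heven : φ.Even) {R : ℝ}
    (hφ : IntervalIntegrable φ volume (-R) R) :
    ∫ t in -R..R, (φ t : ℂ) * exp (-I * t) = ((∫ t in -R..R, φ t * Real.cos t : ℝ) : ℂ) := by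
  have hexp (t : ℝ) : (φ t : ℂ) * exp (-I * t) =
      ((φ t * Real.cos t : ℝ) : ℂ) - I * ((φ t * Real.sin t : ℝ) : ℂ) := by
    rw [show -I * t = ((-t : ℝ) : ℂ) * I by push_cast; ring, exp_mul_I, ← ofReal_cos,
      ← ofReal_sin, Real.cos_neg, Real.sin_neg]
    push_cast
    ring
  have hodd : ∫ t in -R..R, φ t * Real.sin t = 0 :=
    (heven.mul_odd fun t => Real.sin_neg t).intervalIntegral_symm_eq_zero R
  have hcos := hφ.mul_continuousOn Real.continuous_cos.continuousOn
  have hsin := hφ.mul_continuousOn Real.continuous_sin.continuousOn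
  have hcos' : IntervalIntegrable (fun t => ((φ t * Real.cos t : ℝ) : ℂ)) volume (-R) R :=
    ⟨hcos.1.ofReal, hcos.2.ofReal⟩
  have hsin' : IntervalIntegrable (fun t => ((φ t * Real.sin t : ℝ) : ℂ)) volume (-R) R :=
    ⟨hsin.1.ofReal, hsin.2.ofReal⟩
  simp only [hexp]
  rw [intervalIntegral.integral_sub hcos' (hsin'.const_mul I),
    intervalIntegral.integral_const_mul, intervalIntegral.integral_ofReal,
    intervalIntegral.integral_ofReal, hodd, ofReal_zero, mul_zero, sub_zero]

lemma exp_neg_I_sub_mul_exp_I_sub (a b : ℝ) :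
    (exp (-I * a) - exp (-I * b)) * (exp (I * a) - exp (I * b)) =
      2 * ((1 - Real.cos (b - a) : ℝ) : ℂ) := by
  have hcos := two_cos ((b - a : ℝ) : ℂ)
  have h₁ : exp (-I * a) * exp (I * a) = 1 := by rw [← exp_add]; simp
  have h₂ : exp (-I * b) * exp (I * b) = 1 := by rw [← exp_add]; simp
  have h₃ : exp (-I * a) * exp (I * b) = exp ((b - a) * I) := by
    rw [← exp_add]; ring_nf
  have h₄ : exp (-I * b) * exp (I * a) = exp (-(b - a) * I) := by
    rw [← exp_add]; ring_nf
  rw [← ofReal_cos] at hcos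
  push_cast at hcos ⊢
  linear_combination h₁ + h₂ - h₃ - h₄ + hcos

lemma resonant_integrand_eq (ξ η : ℝ) :
    (exp (-I * ξ) - exp (-I * η)) * (exp (I * ξ) - exp (I * η)) / ((ξ : ℂ) - η) ^ 2 *
        exp (-I * η) =
      2 * exp (-I * ξ) * ((oneSubCosDivSq (η - ξ) : ℂ) * exp (-I * ((η - ξ : ℝ) : ℂ))) := by
  rw [exp_neg_I_sub_mul_exp_I_sub, oneSubCosDivSq,
    show -I * η = -I * ξ + -I * ((η - ξ : ℝ) : ℂ) by push_cast; ring, exp_add,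
    show ((ξ : ℂ) - η) ^ 2 = ((η - ξ : ℝ) : ℂ) ^ 2 by push_cast; ring]
  push_cast
  ring

/-- Vanishing of the resonant term in Case II of the localization lemma:
`(1/(πi)) p.v.∫ (e^{-iξ} − e^{-iη})(e^{iξ} − e^{iη})/(ξ − η)² · e^{-iη} dη = 0`,
with the principal value at infinity realized as a limit over `|ξ − η| < R`. -/
theorem stmt7 (ξ : ℝ) :
    Tendsto (fun R : ℝ =>
        (1 / ((Real.pi : ℂ) * Complex.I)) *
          ∫ η in {η : ℝ | |ξ - η| < R},
            (Complex.exp (-Complex.I * ξ) - Complex.exp (-Complex.I * η)) *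
              (Complex.exp (Complex.I * ξ) - Complex.exp (Complex.I * η)) /
                ((ξ : ℂ) - (η : ℂ)) ^ 2 *
              Complex.exp (-Complex.I * η))
      atTop (𝓝 0) := by
  have hball (R : ℝ) : {η : ℝ | |ξ - η| < R} = Set.Ioo (ξ - R) (ξ + R) := by
    rw [← Real.ball_eq_Ioo]
    ext η
    rw [Set.mem_ofPred_eq, Metric.mem_ball, Real.dist_eq, abs_sub_comm]
  have hpv (R : ℝ) (hR : 0 ≤ R) :
      ∫ η in {η : ℝ | |ξ - η| < R},
          (exp (-I * ξ) - exp (-I * η)) * (exp (I * ξ) - exp (I * η)) / ((ξ : ℂ) - η) ^ 2 *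
            exp (-I * η) =
        2 * exp (-I * ξ) * ((∫ t in -R..R, oneSubCosDivSq t * Real.cos t : ℝ) : ℂ) := by
    rw [hball, ← integral_Ioc_eq_integral_Ioo, ← intervalIntegral.integral_of_le (by linarith)]
    simp only [resonant_integrand_eq]
    rw [intervalIntegral.integral_const_mul,
      intervalIntegral.integral_comp_sub_right
        (fun t : ℝ => (oneSubCosDivSq t : ℂ) * exp (-I * t)) ξ,
      sub_sub_cancel_left, add_sub_cancel_left,
      even_oneSubCosDivSq.integral_ofReal_mul_exp_neg_I
        integrable_oneSubCosDivSq.intervalIntegrable]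
  have hlim := (tendsto_integral_oneSubCosDivSq_mul_cos.ofReal.const_mul
    (2 * exp (-I * ξ))).const_mul (1 / ((Real.pi : ℂ) * I))
  rw [ofReal_zero, mul_zero, mul_zero] at hlim
  refine hlim.congr' ?_
  filter_upwards [eventually_ge_atTop 0] with R hR
  rw [hpv R hR]
end
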